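/- arXiv:2210.09655 — 2 statements merged into one kernel-verified Lean document; each statement's English description precedes it below -/
import Mathlib

section
/- Let m, n be positive natural numbers and let I1, I2 be real-valued images on the (2m)×(2n) grid, and set c = I1 − I2 pixelwise. Define the pixel loss L2(I1,I2) = (1/(4mn)) · Σ_{p<2m, q<2n} c(p,q)^2, and for each Haar filter f ∈ {LL, LH, HL, HH} define the subband loss L2_f(I1,I2) = (1/(16mn)) · Σ_{i<m, j<n} (f-coefficient of c at block (i,j))^2. Then L2(I1,I2) = L2_LL(I1,I2) + L2_LH(I1,I2) + L2_HL(I1,I2) + L2_HH(I1,I2), i.e. the L2 loss decomposes as the sum over the four Haar filters of the corresponding subband losses with equal weights. -/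
open Finset

private lemma pair_sum (f : ℕ → ℝ) (k : ℕ) :
    ∑ i ∈ range (2*k), f i = ∑ i ∈ range k, (f (2*i) + f (2*i+1)) := by
  induction k with
  | zero => simp
  | succ k ih =>
      have : 2 * (k+1) = (2*k) + 1 + 1 := by ring
      rw [this, sum_range_succ, sum_range_succ, ih, sum_range_succ]
      ring

theorem L2_loss_haar_subband_decomposition (m n : ℕ) (hm : 0 < m) (hn : 0 < n)
    (I₁ I₂ : ℕ → ℕ → ℝ) (c : ℕ → ℕ → ℝ) (hc : ∀ p q, c p q = I₁ p q - I₂ p q) :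
    (1 / (4 * (m : ℝ) * n)) * ∑ p ∈ range (2*m), ∑ q ∈ range (2*n), (c p q) ^ 2
      = (1 / (16 * (m : ℝ) * n)) * ∑ i ∈ range m, ∑ j ∈ range n,
          (c (2*i) (2*j) + c (2*i) (2*j+1) + c (2*i+1) (2*j) + c (2*i+1) (2*j+1)) ^ 2
        + (1 / (16 * (m : ℝ) * n)) * ∑ i ∈ range m, ∑ j ∈ range n,
          (-c (2*i+1) (2*j+1) - c (2*i+1) (2*j) + c (2*i) (2*j+1) + c (2*i) (2*j)) ^ 2
        + (1 / (16 * (m : ℝ) * n)) * ∑ i ∈ range m, ∑ j ∈ range n,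
          (-c (2*i+1) (2*j+1) + c (2*i+1) (2*j) - c (2*i) (2*j+1) + c (2*i) (2*j)) ^ 2
        + (1 / (16 * (m : ℝ) * n)) * ∑ i ∈ range m, ∑ j ∈ range n,
          (c (2*i+1) (2*j+1) - c (2*i+1) (2*j) - c (2*i) (2*j+1) + c (2*i) (2*j)) ^ 2 := by
  have hlhs : ∑ p ∈ range (2*m), ∑ q ∈ range (2*n), (c p q) ^ 2
      = ∑ i ∈ range m, ∑ j ∈ range n,
        ((c (2*i) (2*j))^2 + (c (2*i) (2*j+1))^2 + (c (2*i+1) (2*j))^2 + (c (2*i+1) (2*j+1))^2) := by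
    rw [pair_sum (fun p => ∑ q ∈ range (2*n), (c p q) ^ 2) m]
    refine sum_congr rfl fun i _ => ?_
    rw [pair_sum (fun q => (c (2*i) q) ^ 2) n, pair_sum (fun q => (c (2*i+1) q) ^ 2) n,
      ← sum_add_distrib]
    exact sum_congr rfl fun j _ => by ring
  rw [hlhs, ← mul_add, ← mul_add, ← mul_add, ← sum_add_distrib, ← sum_add_distrib,
    ← sum_add_distrib]
  simp only [← sum_add_distrib]
  rw [mul_sum, mul_sum]
  refine sum_congr rfl fun i _ => ?_
  rw [mul_sum, mul_sum]
  refine sum_congr rfl fun j _ => ?_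
  have hm' : (m : ℝ) ≠ 0 := Nat.cast_ne_zero.mpr hm.ne'
  have hn' : (n : ℝ) ≠ 0 := Nat.cast_ne_zero.mpr hn.ne'
  field_simp
  ring
end

section
/- Let m, n be positive natural numbers, σ > 0, and let (c(p,q))_{p<2m, q<2n} be a family of independent real random variables on a probability space (Ω, P), each with law equal to the Gaussian measure with mean 0 and variance σ². Define L1 = (1/(4mn)) · Σ_{p<2m, q<2n} |c(p,q)|, and for each Haar filter f ∈ {LL, LH, HL, HH} define L1_f = (1/(mn)) · Σ_{i<m, j<n} |f-coefficient of c at block (i,j)|. Then log E[L1] + log 2 = (1/4) · (log E[L1_LL] + log E[L1_LH] + log E[L1_HL] + log E[L1_HH]); that is, Lemma 1 of the paper holds exactly in the centered case μ = 0 with the constant C = log 2. -/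
/-! Each Haar coefficient is a `±1` combination of four independent `N(0, σ²)` pixels, hence is
`N(0, 4σ²)`, the law of twice a single pixel. So every filter has expected L1 loss `2 E|c|`, and
`log E[L1] + log 2 = log (2 E|c|)` is the average of four equal logarithms. -/

open MeasureTheory ProbabilityTheory Real

/-- The index `2*i` inside `Fin (2*m)`. -/
def idxLo {m : ℕ} (i : Fin m) : Fin (2 * m) := ⟨2 * i.val, by have := i.isLt; omega⟩

/-- The index `2*i+1` inside `Fin (2*m)`. -/
def idxHi {m : ℕ} (i : Fin m) : Fin (2 * m) := ⟨2 * i.val + 1, by have := i.isLt; omega⟩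

/-- The `LL` Haar coefficient of `c` at block `(i, j)`. -/
def haarLL {m n : ℕ} (c : Fin (2 * m) × Fin (2 * n) → ℝ) (i : Fin m) (j : Fin n) : ℝ :=
  c (idxLo i, idxLo j) + c (idxLo i, idxHi j) + c (idxHi i, idxLo j) + c (idxHi i, idxHi j)

/-- The `LH` Haar coefficient of `c` at block `(i, j)`. -/
def haarLH {m n : ℕ} (c : Fin (2 * m) × Fin (2 * n) → ℝ) (i : Fin m) (j : Fin n) : ℝ :=
  -c (idxHi i, idxHi j) - c (idxHi i, idxLo j) + c (idxLo i, idxHi j) + c (idxLo i, idxLo j)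

/-- The `HL` Haar coefficient of `c` at block `(i, j)`. -/
def haarHL {m n : ℕ} (c : Fin (2 * m) × Fin (2 * n) → ℝ) (i : Fin m) (j : Fin n) : ℝ :=
  -c (idxHi i, idxHi j) + c (idxHi i, idxLo j) - c (idxLo i, idxHi j) + c (idxLo i, idxLo j)

/-- The `HH` Haar coefficient of `c` at block `(i, j)`. -/
def haarHH {m n : ℕ} (c : Fin (2 * m) × Fin (2 * n) → ℝ) (i : Fin m) (j : Fin n) : ℝ :=
  c (idxHi i, idxHi j) - c (idxHi i, idxLo j) - c (idxLo i, idxHi j) + c (idxLo i, idxLo j)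

open scoped NNReal

namespace ProbabilityTheory

variable {Ω ι : Type*} {mΩ : MeasurableSpace Ω} {P : Measure Ω}

lemma iIndepFun.hasLaw_sum_gaussianReal [IsProbabilityMeasure P] {X : ι → Ω → ℝ}
    {μ : ι → ℝ} {v : ι → ℝ≥0} (hind : iIndepFun X P)
    (hX : ∀ i, HasLaw (X i) (gaussianReal (μ i) (v i)) P) (s : Finset ι) :
    HasLaw (∑ i ∈ s, X i) (gaussianReal (∑ i ∈ s, μ i) (∑ i ∈ s, v i)) P := by
  classical
  induction s using Finset.induction_on with
  | empty =>
    simp only [Finset.sum_empty, gaussianReal_zero_var]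
    exact ⟨aemeasurable_const, by simp [Pi.zero_def, Measure.map_const]⟩
  | insert a s ha ih =>
    simp only [Finset.sum_insert ha, add_comm _ (∑ i ∈ s, _)]
    rw [← gaussianReal_conv_gaussianReal]
    exact (hind.indepFun_finsetSum_of_notMem₀ (fun i => (hX i).aemeasurable) ha).hasLaw_add
      ih (hX a)

lemma iIndepFun.hasLaw_sum_mul_gaussianReal [IsProbabilityMeasure P] [Fintype ι]
    {X : ι → Ω → ℝ} {μ : ι → ℝ} {v : ι → ℝ≥0} (hind : iIndepFun X P)
    (hX : ∀ i, HasLaw (X i) (gaussianReal (μ i) (v i)) P) (w : ι → ℝ) :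
    HasLaw (fun ω => ∑ i, w i * X i ω)
      (gaussianReal (∑ i, w i * μ i) (∑ i, .mk (w i ^ 2) (sq_nonneg _) * v i)) P := by
  have hindw := hind.comp (fun i x => w i * x) fun i => measurable_const_mul (w i)
  simpa only [Finset.sum_fn, Function.comp_apply] using
    hindw.hasLaw_sum_gaussianReal (fun i => gaussianReal_const_mul (hX i) (w i)) Finset.univ

lemma iIndepFun.hasLaw_sum_sign_mul_gaussianReal [IsProbabilityMeasure P] {κ : Type*}
    [Fintype κ] {X : ι → Ω → ℝ} {v : ℝ≥0} (hind : iIndepFun X P)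
    (hX : ∀ i, HasLaw (X i) (gaussianReal 0 v) P) {p : κ → ι} (hp : p.Injective)
    {w : κ → ℝ} (hw : ∀ k, w k ^ 2 = 1) :
    HasLaw (fun ω => ∑ k, w k * X (p k) ω) (gaussianReal 0 (Fintype.card κ * v)) P := by
  have hunit : ∀ k, NNReal.mk (w k ^ 2) (sq_nonneg _) = 1 := fun k => NNReal.eq (hw k)
  simpa only [mul_zero, Finset.sum_const_zero, hunit, one_mul, Finset.sum_const,
    Finset.card_univ, nsmul_eq_mul] using
    (hind.precomp hp).hasLaw_sum_mul_gaussianReal (fun k => hX (p k)) w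

lemma HasLaw.integrable_abs_of_gaussianReal {Y : Ω → ℝ} {μ : ℝ} {v : ℝ≥0}
    (hY : HasLaw Y (gaussianReal μ v) P) : Integrable (fun ω => |Y ω|) P :=
  (integrable_map_measure continuous_abs.aestronglyMeasurable hY.aemeasurable).mp
    (by rw [hY.map_eq]; exact IsGaussian.integrable_id.abs)

lemma HasLaw.integral_abs_of_gaussianReal {Y : Ω → ℝ} {μ : ℝ} {v : ℝ≥0}
    (hY : HasLaw Y (gaussianReal μ v) P) : ∫ ω, |Y ω| ∂P = ∫ x, |x| ∂gaussianReal μ v :=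
  hY.integral_comp continuous_abs.aestronglyMeasurable

lemma integral_abs_gaussianReal_const_mul_var (c : ℝ) (v : ℝ≥0) :
    ∫ x, |x| ∂gaussianReal 0 (.mk (c ^ 2) (sq_nonneg _) * v)
      = |c| * ∫ x, |x| ∂gaussianReal 0 v := by
  have hmap := gaussianReal_map_const_mul (μ := 0) (v := v) c
  rw [mul_zero] at hmap
  rw [← hmap, integral_map (by fun_prop) (by fun_prop)]
  simp_rw [abs_mul, integral_const_mul]

lemma integral_abs_gaussianReal_pos (μ : ℝ) {v : ℝ≥0} (hv : v ≠ 0) :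
    0 < ∫ x, |x| ∂gaussianReal μ v := by
  rw [integral_pos_iff_support_of_nonneg abs_nonneg IsGaussian.integrable_id.abs]
  have hsupp : Function.support (fun x : ℝ => |x|) = {0}ᶜ := by ext; simp
  rw [hsupp, measure_compl (measurableSet_singleton 0) (measure_ne_top _ _),
    gaussianReal_absolutelyContinuous μ hv (measure_singleton 0)]
  simp

lemma integral_const_mul_sum_of_integral_eq {κ : Type*} [Fintype κ] {f : κ → Ω → ℝ}
    (hf : ∀ k, Integrable (f k) P) {a : ℝ} (ha : ∀ k, ∫ ω, f k ω ∂P = a) (r : ℝ) :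
    ∫ ω, r * ∑ k, f k ω ∂P = r * (Fintype.card κ * a) := by
  rw [integral_const_mul, integral_finsetSum _ fun k _ => hf k]
  simp [ha]

end ProbabilityTheory

def haarBlock {m n : ℕ} (i : Fin m) (j : Fin n) (k : Fin 4) : Fin (2 * m) × Fin (2 * n) :=
  (⟨2 * i + k / 2, by omega⟩, ⟨2 * j + k % 2, by omega⟩)

lemma haarBlock_injective {m n : ℕ} (i : Fin m) (j : Fin n) : (haarBlock i j).Injective := by
  intro k l h
  simp only [haarBlock, Prod.mk.injEq, Fin.mk.injEq] at h
  omega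

lemma haarLL_eq_sum {m n : ℕ} (c : Fin (2 * m) × Fin (2 * n) → ℝ) (i : Fin m) (j : Fin n) :
    haarLL c i j = ∑ k, ![1, 1, 1, 1] k * c (haarBlock i j k) := by
  simp [Fin.sum_univ_four, haarLL, haarBlock, idxLo, idxHi]

lemma haarLH_eq_sum {m n : ℕ} (c : Fin (2 * m) × Fin (2 * n) → ℝ) (i : Fin m) (j : Fin n) :
    haarLH c i j = ∑ k, ![1, 1, -1, -1] k * c (haarBlock i j k) := by
  simp [Fin.sum_univ_four, haarLH, haarBlock, idxLo, idxHi]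
  ring

lemma haarHL_eq_sum {m n : ℕ} (c : Fin (2 * m) × Fin (2 * n) → ℝ) (i : Fin m) (j : Fin n) :
    haarHL c i j = ∑ k, ![1, -1, 1, -1] k * c (haarBlock i j k) := by
  simp [Fin.sum_univ_four, haarHL, haarBlock, idxLo, idxHi]
  ring

lemma haarHH_eq_sum {m n : ℕ} (c : Fin (2 * m) × Fin (2 * n) → ℝ) (i : Fin m) (j : Fin n) :
    haarHH c i j = ∑ k, ![1, -1, -1, 1] k * c (haarBlock i j k) := by
  simp [Fin.sum_univ_four, haarHH, haarBlock, idxLo, idxHi]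
  ring

section HaarFilters

variable {Ω : Type*} [MeasurableSpace Ω] {P : Measure Ω}
  {m n : ℕ} {c : Fin (2 * m) × Fin (2 * n) → Ω → ℝ} {v : ℝ≥0}

lemma integral_mean_abs_pixel (hm : 0 < m) (hn : 0 < n)
    (hc : ∀ pq, HasLaw (c pq) (gaussianReal 0 v) P) :
    ∫ ω, (1 / (4 * (m : ℝ) * n)) * ∑ pq, |c pq ω| ∂P = ∫ x, |x| ∂gaussianReal 0 v := by
  rw [integral_const_mul_sum_of_integral_eq (fun pq => (hc pq).integrable_abs_of_gaussianReal)
    (fun pq => (hc pq).integral_abs_of_gaussianReal)]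
  simp only [Fintype.card_prod, Fintype.card_fin]
  push_cast
  field_simp
  ring

lemma integral_mean_abs_haar_filter [IsProbabilityMeasure P] (hm : 0 < m) (hn : 0 < n)
    (hind : iIndepFun c P)
    (hc : ∀ pq, HasLaw (c pq) (gaussianReal 0 v) P) {w : Fin 4 → ℝ} (hw : ∀ k, w k ^ 2 = 1) :
    ∫ ω, (1 / ((m : ℝ) * n)) * ∑ i : Fin m, ∑ j : Fin n,
        |∑ k, w k * c (haarBlock i j k) ω| ∂P = 2 * ∫ x, |x| ∂gaussianReal 0 v := by
  have hblock : ∀ ij : Fin m × Fin n, HasLaw (fun ω => ∑ k, w k * c (haarBlock ij.1 ij.2 k) ω)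
      (gaussianReal 0 (.mk (2 ^ 2) (sq_nonneg _) * v)) P := fun ij => by
    convert hind.hasLaw_sum_sign_mul_gaussianReal hc (haarBlock_injective ij.1 ij.2) hw using 3
    ext
    norm_num
  simp_rw [← Fintype.sum_prod_type']
  rw [integral_const_mul_sum_of_integral_eq (fun ij => (hblock ij).integrable_abs_of_gaussianReal)
    (fun ij => (hblock ij).integral_abs_of_gaussianReal), integral_abs_gaussianReal_const_mul_var]
  simp only [Fintype.card_prod, Fintype.card_fin, Nat.cast_mul, Nat.abs_ofNat]
  field_simp

end HaarFilters

theorem log_expected_L1_decomposition_centered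
    (m n : ℕ) (hm : 0 < m) (hn : 0 < n)
    {Ω : Type*} [MeasurableSpace Ω] (P : Measure Ω) [IsProbabilityMeasure P]
    (σ : ℝ) (hσ : 0 < σ) (c : Fin (2 * m) × Fin (2 * n) → Ω → ℝ)
    (hindep : iIndepFun c P)
    (hlaw : ∀ pq, Measure.map (c pq) P = gaussianReal 0 ⟨σ ^ 2, sq_nonneg σ⟩) :
    Real.log (∫ ω, (1 / (4 * (m : ℝ) * n)) *
          ∑ pq : Fin (2 * m) × Fin (2 * n), |c pq ω| ∂P) + Real.log 2
      = (1 / 4) *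
          (Real.log (∫ ω, (1 / ((m : ℝ) * n)) * ∑ i : Fin m, ∑ j : Fin n,
              |haarLL (fun pq => c pq ω) i j| ∂P)
            + Real.log (∫ ω, (1 / ((m : ℝ) * n)) * ∑ i : Fin m, ∑ j : Fin n,
              |haarLH (fun pq => c pq ω) i j| ∂P)
            + Real.log (∫ ω, (1 / ((m : ℝ) * n)) * ∑ i : Fin m, ∑ j : Fin n,
              |haarHL (fun pq => c pq ω) i j| ∂P)
            + Real.log (∫ ω, (1 / ((m : ℝ) * n)) * ∑ i : Fin m, ∑ j : Fin n,
              |haarHH (fun pq => c pq ω) i j| ∂P)) := by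
  set v : ℝ≥0 := ⟨σ ^ 2, sq_nonneg σ⟩
  have hv : v ≠ 0 := fun h =>
    hσ.ne' ((pow_eq_zero_iff two_ne_zero).mp (congrArg NNReal.toReal h))
  have hc : ∀ pq, HasLaw (c pq) (gaussianReal 0 v) P := fun pq =>
    ⟨.of_map_ne_zero (by simp [hlaw pq, NeZero.ne]), hlaw pq⟩
  simp_rw [haarLL_eq_sum, haarLH_eq_sum, haarHL_eq_sum, haarHH_eq_sum]
  rw [integral_mean_abs_pixel hm hn hc, integral_mean_abs_haar_filter hm hn hindep hc,
    integral_mean_abs_haar_filter hm hn hindep hc, integral_mean_abs_haar_filter hm hn hindep hc,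
    integral_mean_abs_haar_filter hm hn hindep hc]
  · rw [log_mul two_ne_zero (integral_abs_gaussianReal_pos 0 hv).ne']
    ring
  all_goals intro k; fin_cases k <;> norm_num
end
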